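/- Let x, y, u, v be complex numbers satisfying u + v = xy and uv = x² + y² − 4. Then H(G(x,q)·G(y,q)) = G(u,q)·G(v,q) in ℂ[[q]]. -/

import Mathlib

/-- The formal power series `∑_{n ≥ 1} c(n) q^{e(n)}` in `ℂ[[q]]`, defined coefficientwise.
(Any `n ≥ 1` with `n² = k` satisfies `n ≤ k + 1`, so the truncated range captures every term.) -/
noncomputable def mkSum (e : ℕ → ℕ) (c : ℕ → ℂ) : PowerSeries ℂ :=
  PowerSeries.mk fun k => ∑ n ∈ Finset.range (k + 2), if 1 ≤ n ∧ e n = k then c n else 0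

/-- `G(x,q) = 1 + 2 ∑_{n ≥ 1} T_{2n}(x/2) q^{n²}`, where `T` is the Chebyshev polynomial of the
first kind. -/
noncomputable def G (x : ℂ) : PowerSeries ℂ :=
  1 + 2 * mkSum (fun n => n ^ 2) fun n => (Polynomial.Chebyshev.T ℂ (2 * (n : ℤ))).eval (x / 2)

/-- The 2-dissection ("huffing") operator `H(∑ a_n q^n) = ∑ a_{2n} q^n`. -/
noncomputable def H (F : PowerSeries ℂ) : PowerSeries ℂ :=
  PowerSeries.mk fun n => PowerSeries.coeff (2 * n) F

/-! Write `x = z + z⁻¹` and `y = w + w⁻¹`. The identity `T_n((z + z⁻¹)/2) = (zⁿ + z⁻ⁿ)/2`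
turns `G x` into the theta series `∑_{n ∈ ℤ} z^{2n} q^{n²}`, so that
`G x * G y = ∑_{m,n} z^{2m} w^{2n} q^{m² + n²}`. The exponent `m² + n²` is even exactly when
`m ≡ n (mod 2)`, and then `m = a + b`, `n = a - b` with `m² + n² = 2(a² + b²)`; hence
`H (G x * G y) = G (zw + (zw)⁻¹) * G (z/w + w/z)`. The two arguments on the right have sum `xy`
and product `x² + y² - 4`, so they are `u` and `v` in some order. -/

open Finset PowerSeries

lemma Polynomial.Chebyshev.T_eval_add_inv_div_two {z : ℂ} (hz : z ≠ 0) (n : ℤ) :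
    (T ℂ n).eval ((z + z⁻¹) / 2) = (z ^ n + z ^ (-n)) / 2 := by
  obtain ⟨θ, rfl⟩ : ∃ θ, Complex.exp θ = z := ⟨Complex.log z, Complex.exp_log hz⟩
  have hcosh : ∀ w : ℂ, (Complex.exp w + (Complex.exp w)⁻¹) / 2 = Complex.cosh w := fun w => by
    rw [← Complex.exp_neg, ← Complex.two_cosh]; ring
  rw [hcosh, T_complex_cosh, ← hcosh, ← Complex.exp_int_mul, ← Complex.exp_neg, ← neg_mul,
    ← Complex.exp_int_mul, Int.cast_neg]

lemma Int.mem_Icc_of_sq_le {n : ℤ} {k : ℕ} (h : n ^ 2 ≤ k) : n ∈ Icc (-(k : ℤ)) k := by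
  have := Int.le_self_sq n
  have := Int.le_self_sq (-n)
  rw [mem_Icc]
  constructor <;> nlinarith

noncomputable def sqFiber (k : ℕ) : Finset ℤ := {n ∈ Icc (-(k : ℤ)) k | n ^ 2 = k}

@[simp]
lemma mem_sqFiber {k : ℕ} {n : ℤ} : n ∈ sqFiber k ↔ n ^ 2 = k := by
  simp only [sqFiber, mem_filter, and_iff_right_iff_imp]
  exact fun h => Int.mem_Icc_of_sq_le h.le

noncomputable def sumSqFiber (k : ℕ) : Finset (ℤ × ℤ) :=
  {p ∈ Icc (-(k : ℤ)) k ×ˢ Icc (-(k : ℤ)) k | p.1 ^ 2 + p.2 ^ 2 = k}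

@[simp]
lemma mem_sumSqFiber {k : ℕ} {p : ℤ × ℤ} : p ∈ sumSqFiber k ↔ p.1 ^ 2 + p.2 ^ 2 = k := by
  simp only [sumSqFiber, mem_filter, mem_product, and_iff_right_iff_imp]
  exact fun h => ⟨Int.mem_Icc_of_sq_le (by nlinarith), Int.mem_Icc_of_sq_le (by nlinarith)⟩

section Theta

variable {R : Type*} [CommSemiring R]

noncomputable def theta (c : ℤ → R) : R⟦X⟧ := mk fun k => ∑ n ∈ sqFiber k, c n

noncomputable def theta₂ (c : ℤ × ℤ → R) : R⟦X⟧ := mk fun k => ∑ p ∈ sumSqFiber k, c p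

lemma sumSqFiber_eq_biUnion (k : ℕ) :
    sumSqFiber k = (antidiagonal k).biUnion fun ij => sqFiber ij.1 ×ˢ sqFiber ij.2 := by
  ext ⟨m, n⟩
  simp only [mem_sumSqFiber, mem_biUnion, HasAntidiagonal.mem_antidiagonal, mem_product,
    mem_sqFiber, Prod.exists]
  constructor
  · intro h
    refine ⟨m.natAbs ^ 2, n.natAbs ^ 2, ?_, ?_, ?_⟩ <;> zify <;> simp only [sq_abs, h]
  · rintro ⟨i, j, hij, hi, hj⟩
    rw [hi, hj, ← hij, Nat.cast_add]

lemma theta_mul_theta (c d : ℤ → R) : theta c * theta d = theta₂ fun p => c p.1 * d p.2 := by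
  ext k
  rw [coeff_mul, theta₂, coeff_mk, sumSqFiber_eq_biUnion, sum_biUnion]
  · refine sum_congr rfl fun ij _ => ?_
    rw [theta, theta, coeff_mk, coeff_mk, sum_mul_sum, sum_product]
  · intro ij _ ij' _ hne
    refine disjoint_left.mpr fun p hp hp' => hne ?_
    simp only [mem_product, mem_sqFiber] at hp hp'
    exact Prod.ext (by exact_mod_cast hp.1.symm.trans hp'.1)
      (by exact_mod_cast hp.2.symm.trans hp'.2)

end Theta

lemma Int.two_dvd_add_of_sq_add_sq_eq_two_mul {m n k : ℤ} (h : m ^ 2 + n ^ 2 = 2 * k) :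
    2 ∣ m + n := by
  have : Even ((m + n) ^ 2) := ⟨k + m * n, by linear_combination h⟩
  exact (Int.even_pow.mp this).1.two_dvd

lemma H_theta₂ (c : ℤ × ℤ → ℂ) : H (theta₂ c) = theta₂ fun p => c (p.1 + p.2, p.1 - p.2) := by
  ext k
  rw [H, theta₂, theta₂, coeff_mk, coeff_mk, coeff_mk]
  symm
  refine sum_nbij (fun p => (p.1 + p.2, p.1 - p.2)) ?_ ?_ ?_ fun _ _ => rfl
  · intro p hp
    simp only [mem_sumSqFiber] at hp ⊢
    push_cast
    linear_combination 2 * hp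
  · intro p _ q _ h
    simp only [Prod.mk.injEq] at h
    ext <;> omega
  · rintro ⟨m, n⟩ hmn
    rw [mem_coe, mem_sumSqFiber, Nat.cast_mul, Nat.cast_two] at hmn
    obtain ⟨r, hr⟩ := Int.two_dvd_add_of_sq_add_sq_eq_two_mul hmn
    refine ⟨(r, r - n), ?_, by ext <;> dsimp only <;> omega⟩
    rw [mem_coe, mem_sumSqFiber]
    have hm : m = 2 * r - n := by omega
    subst hm
    linarith

section SqFiberSum

variable {M : Type*} [AddCommMonoid M]

lemma sum_sqFiber_ite_pos (g : ℤ → M) (k : ℕ) :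
    ∑ n ∈ sqFiber k, (if 0 < n then g n else 0) =
      ∑ n ∈ range (k + 2), if 1 ≤ n ∧ n ^ 2 = k then g n else 0 := by
  rw [← sum_filter, ← sum_filter]
  refine sum_nbij' Int.toNat (fun n => n) ?_ ?_ ?_ ?_ ?_
  · intro n hn
    simp only [mem_filter, mem_sqFiber, mem_range] at hn ⊢
    have := Int.le_self_sq n
    refine ⟨by omega, by omega, ?_⟩
    rw [← Nat.cast_inj (R := ℤ), Nat.cast_pow, Int.toNat_of_nonneg hn.2.le]
    exact hn.1
  · intro n hn
    simp only [mem_filter, mem_sqFiber, mem_range] at hn ⊢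
    exact ⟨by exact_mod_cast hn.2.2, by omega⟩
  · intro n hn
    simp only [mem_filter] at hn
    omega
  · exact fun n _ => Int.toNat_natCast n
  · intro n hn
    simp only [mem_filter] at hn
    rw [Int.toNat_of_nonneg hn.2.le]

lemma sum_sqFiber_eq_sum_range (f : ℤ → M) (k : ℕ) :
    ∑ n ∈ sqFiber k, f n = (if k = 0 then f 0 else 0) +
      ∑ n ∈ range (k + 2), if 1 ≤ n ∧ n ^ 2 = k then f n + f (-n) else 0 := by
  have hsplit : ∀ n, f n =
      (if n = 0 then f n else 0) + (if 0 < n then f n else 0) + (if 0 < -n then f n else 0) := by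
    intro n
    split_ifs <;> first | omega | simp
  have neg : ∑ n ∈ sqFiber k, (if 0 < -n then f n else 0) =
      ∑ n ∈ sqFiber k, (if 0 < n then f (-n) else 0) :=
    sum_nbij' Neg.neg Neg.neg (by simp) (by simp) (by simp) (by simp) (by simp)
  rw [sum_congr rfl fun n _ => hsplit n, sum_add_distrib, sum_add_distrib, neg, add_assoc,
    ← sum_add_distrib, sum_ite_eq']
  congr 1
  · simp [eq_comm]
  · simpa only [ite_add_ite, add_zero] using sum_sqFiber_ite_pos (fun n => f n + f (-n)) k

end SqFiberSum

lemma G_add_inv {z : ℂ} (hz : z ≠ 0) : G (z + z⁻¹) = theta fun n => z ^ (2 * n) := by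
  ext k
  rw [theta, coeff_mk, sum_sqFiber_eq_sum_range, G, mkSum, map_add, coeff_one, ← map_ofNat C 2,
    coeff_C_mul, coeff_mk, mul_sum]
  congr 1
  refine sum_congr rfl fun n _ => ?_
  rw [mul_ite, mul_zero, Polynomial.Chebyshev.T_eval_add_inv_div_two hz,
    mul_div_cancel₀ _ two_ne_zero, mul_neg]

lemma H_G_add_inv_mul_G_add_inv {z w : ℂ} (hz : z ≠ 0) (hw : w ≠ 0) :
    H (G (z + z⁻¹) * G (w + w⁻¹)) = G (z * w + (z * w)⁻¹) * G (z / w + (z / w)⁻¹) := by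
  rw [G_add_inv hz, G_add_inv hw, G_add_inv (mul_ne_zero hz hw), G_add_inv (div_ne_zero hz hw),
    theta_mul_theta, theta_mul_theta, H_theta₂]
  congr 1
  funext p
  rw [mul_zpow, div_zpow, mul_add, mul_sub, zpow_add₀ hz, zpow_sub₀ hw]
  field_simp

lemma exists_add_inv_eq (x : ℂ) : ∃ z : ℂ, z ≠ 0 ∧ z + z⁻¹ = x := by
  obtain ⟨s, hs⟩ := IsAlgClosed.exists_eq_mul_self (x ^ 2 - 4)
  have hprod : (x + s) / 2 * ((x - s) / 2) = 1 := by linear_combination hs / 4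
  refine ⟨(x + s) / 2, left_ne_zero_of_mul_eq_one hprod, ?_⟩
  rw [inv_eq_of_mul_eq_one_right hprod]
  ring

lemma eq_and_eq_or_eq_and_eq_of_add_eq_add_of_mul_eq_mul {K : Type*} [CommRing K]
    [NoZeroDivisors K] {u v a b : K} (hadd : u + v = a + b) (hmul : u * v = a * b) :
    u = a ∧ v = b ∨ u = b ∧ v = a := by
  have : (u - a) * (u - b) = 0 := by linear_combination u * hadd - hmul
  rcases mul_eq_zero.mp this with h | h
  · exact .inl ⟨by linear_combination h, by linear_combination hadd - h⟩
  · exact .inr ⟨by linear_combination h, by linear_combination hadd - h⟩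

/-- If complex numbers `x, y, u, v` satisfy `u + v = xy` and `uv = x² + y² - 4`, then
`H(G(x,q) G(y,q)) = G(u,q) G(v,q)` in `ℂ[[q]]`. -/
theorem huff_G_mul_G (x y u v : ℂ) (h1 : u + v = x * y) (h2 : u * v = x ^ 2 + y ^ 2 - 4) :
    H (G x * G y) = G u * G v := by
  obtain ⟨z, hz, rfl⟩ := exists_add_inv_eq x
  obtain ⟨w, hw, rfl⟩ := exists_add_inv_eq y
  have hadd : u + v = (z * w + (z * w)⁻¹) + (z / w + (z / w)⁻¹) := by
    rw [h1]; field_simp; ring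
  have hmul : u * v = (z * w + (z * w)⁻¹) * (z / w + (z / w)⁻¹) := by
    rw [h2]; field_simp; ring
  rw [H_G_add_inv_mul_G_add_inv hz hw]
  rcases eq_and_eq_or_eq_and_eq_of_add_eq_add_of_mul_eq_mul hadd hmul with ⟨rfl, rfl⟩ | ⟨rfl, rfl⟩
  · rfl
  · exact mul_comm _ _
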